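/- Let 1 < p < n and α ∈ ℝ. There exists a constant C > 0 such that for every u with ⟨x⟩^{α−1} u ∈ L^p(ℝⁿ) and ⟨x⟩^α ∇u ∈ L^p(ℝⁿ), one has ⟨x⟩^α u ∈ L^{p*}(ℝⁿ) with ‖⟨x⟩^α u‖_{L^{p*}} ≤ C (‖⟨x⟩^{α−1} u‖_{L^p} + ‖⟨x⟩^α ∇u‖_{L^p}), where 1/p* = 1/p − 1/n. -/

import Mathlib

open MeasureTheory
open scoped ENNReal NNReal BigOperators

/-- The Japanese bracket weight `⟨x⟩ = (|x|² + 1)^{1/2}` on `ℝⁿ`. -/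
noncomputable def wt {n : ℕ} (x : Fin n → ℝ) : ℝ := Real.sqrt ((∑ i, x i ^ 2) + 1)

/-!
Apply the Gagliardo–Nirenberg–Sobolev inequality to the compactly supported functions
`χ(x/R) ⟨x⟩^α u`, where `χ` is a bump function equal to `1` near `0`. Since
`∇⟨x⟩^α = O(⟨x⟩^(α-1))` and `∇(χ(x/R)) = O(⟨x⟩⁻¹)` uniformly in `R ≥ 1`, the `Lᵖ` norms of their
gradients are bounded by `C (‖⟨x⟩^(α-1) u‖_p + ‖⟨x⟩^α ∇u‖_p)`, and Fatou's lemma lets `R → ∞`.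

As `u` is only differentiable, not `C¹`, the Gagliardo–Nirenberg–Sobolev inequality is needed for
differentiable compactly supported functions. Its usual proof works verbatim: for `p = 1` the
fundamental theorem of calculus along grid lines and the grid-lines lemma, for `1 < p < n` the
case `p = 1` applied to `|u|^γ` followed by Hölder's inequality.
-/

open Set Filter Function Topology

section GagliardoNirenbergSobolev

variable {F : Type*} [NormedAddCommGroup F] [NormedSpace ℝ F] [CompleteSpace F]

theorem enorm_le_lintegral_Iic_deriv_of_differentiable {f : ℝ → F} (hf : Differentiable ℝ f)
    (h2f : HasCompactSupport f) (x : ℝ) : ‖f x‖ₑ ≤ ∫⁻ y in Iic x, ‖deriv f y‖ₑ := by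
  by_cases hfin : ∫⁻ y in Iic x, ‖deriv f y‖ₑ = ∞
  · simp [hfin]
  have hint : IntegrableOn (deriv f) (Iic x) :=
    ⟨(stronglyMeasurable_deriv f).aestronglyMeasurable, Ne.lt_top hfin⟩
  have hlim : Tendsto f atBot (𝓝 0) := by
    rw [hasCompactSupport_iff_eventuallyEq, coclosedCompact_eq_cocompact] at h2f
    exact (h2f.filter_mono atBot_le_cocompact).tendsto
  have hftc : ∫ y in Iic x, deriv f y = f x := by
    simpa using integral_Iic_of_hasDerivAt_of_tendsto' (fun y _ ↦ (hf y).hasDerivAt) hint hlim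
  simpa [hftc] using enorm_integral_le_lintegral_enorm (μ := volume.restrict (Iic x)) (deriv f)

open Finset in
theorem lintegral_pow_le_pow_lintegral_fderiv_of_differentiable {ι : Type*} [Fintype ι]
    {p : ℝ} (hp : Real.HolderConjugate (Fintype.card ι) p) {u : (ι → ℝ) → F}
    (hu : Differentiable ℝ u) (h2u : HasCompactSupport u) :
    ∫⁻ x, ‖u x‖ₑ ^ p ≤ (∫⁻ x, ‖fderiv ℝ u x‖ₑ) ^ p := by
  classical
  have hι : (1 : ℝ) ≤ Fintype.card ι - 1 := by
    linarith [show (2 : ℝ) ≤ Fintype.card ι by exact_mod_cast hp.lt]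
  have hline (x : ι → ℝ) (i : ι) : ‖u x‖ₑ ≤ ∫⁻ y, ‖fderiv ℝ u (update x i y)‖ₑ := calc
    ‖u x‖ₑ = ‖(u ∘ update x i) (x i)‖ₑ := by simp
    _ ≤ ∫⁻ y in Iic (x i), ‖deriv (u ∘ update x i) y‖ₑ :=
      enorm_le_lintegral_Iic_deriv_of_differentiable
        (hu.comp ((contDiff_update 1 x i).differentiable one_ne_zero))
        (h2u.comp_isClosedEmbedding (isClosedEmbedding_update x i)) _
    _ ≤ ∫⁻ y, ‖deriv (u ∘ update x i) y‖ₑ := setLIntegral_le_lintegral _ _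
    _ ≤ ∫⁻ y, ‖fderiv ℝ u (update x i y)‖ₑ := by
      gcongr with y
      rw [fderiv_comp_deriv _ (hu _) (hasDerivAt_update x i y).differentiableAt]
      exact (ContinuousLinearMap.le_opENorm _ _).trans (by simp [deriv_update, Pi.enorm_single])
  calc ∫⁻ x, ‖u x‖ₑ ^ p
      = ∫⁻ x, ∏ _i : ι, ‖u x‖ₑ ^ (1 / (Fintype.card ι - 1 : ℝ)) := by
        congr! 2 with x
        rw [prod_const, card_univ, ← ENNReal.rpow_natCast, ← ENNReal.rpow_mul, hp.conjugate_eq]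
        field_simp
    _ ≤ ∫⁻ x, ∏ i, (∫⁻ y, ‖fderiv ℝ u (update x i y)‖ₑ) ^ (1 / (Fintype.card ι - 1 : ℝ)) := by
        gcongr with x i
        exact hline x i
    _ ≤ (∫⁻ x, ‖fderiv ℝ u x‖ₑ) ^ p :=
        lintegral_prod_lintegral_pow_le _ hp (measurable_fderiv ℝ u).enorm

end GagliardoNirenbergSobolev

section GagliardoNirenbergSobolevLp

variable {ι : Type*} [Fintype ι] {F : Type*} [NormedAddCommGroup F] [InnerProductSpace ℝ F]
  [CompleteSpace F]

theorem lintegral_rpow_le_of_differentiable {u : (ι → ℝ) → F} (hu : Differentiable ℝ u)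
    (h2u : HasCompactSupport u) {n' p q r : ℝ} {γ : ℝ≥0}
    (hn' : Real.HolderConjugate (Fintype.card ι) n') (hpq : Real.HolderConjugate p q)
    (hγ : 1 < γ) (hγn' : γ * n' = r) (hγq : (γ - 1) * q = r) :
    (∫⁻ x, ‖u x‖ₑ ^ r) ^ (1 / n') ≤
      γ * (∫⁻ x, ‖u x‖ₑ ^ r) ^ (1 / q) * (∫⁻ x, ‖fderiv ℝ u x‖ₑ ^ p) ^ (1 / p) := by
  set v : (ι → ℝ) → ℝ := fun x ↦ ‖u x‖ ^ (γ : ℝ)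
  have hv : Differentiable ℝ v := hu.norm_rpow hγ
  have h2v : HasCompactSupport v := h2u.norm.rpow_const (by positivity)
  have hmeas : Measurable fun x ↦ ‖u x‖ₑ ^ ((γ : ℝ) - 1) :=
    hu.continuous.enorm.measurable.pow_const _
  calc (∫⁻ x, ‖u x‖ₑ ^ r) ^ (1 / n')
      = (∫⁻ x, ‖v x‖ₑ ^ n') ^ (1 / n') := by
        simp (discharger := positivity) [v, ← hγn', Real.enorm_rpow_of_nonneg, ENNReal.rpow_mul]
    _ ≤ ((∫⁻ x, ‖fderiv ℝ v x‖ₑ) ^ n') ^ (1 / n') :=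
        ENNReal.rpow_le_rpow (lintegral_pow_le_pow_lintegral_fderiv_of_differentiable hn' hv h2v)
          (by simp [hn'.symm.nonneg])
    _ = ∫⁻ x, ‖fderiv ℝ v x‖ₑ := by
        rw [← ENNReal.rpow_mul, mul_one_div_cancel hn'.symm.pos.ne', ENNReal.rpow_one]
    _ ≤ ∫⁻ x, γ * (‖u x‖ₑ ^ ((γ : ℝ) - 1) * ‖fderiv ℝ u x‖ₑ) := by
        gcongr with x
        rw [← mul_assoc]
        exact enorm_fderiv_norm_rpow_le hu hγ
    _ = γ * ∫⁻ x, ‖u x‖ₑ ^ ((γ : ℝ) - 1) * ‖fderiv ℝ u x‖ₑ :=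
        lintegral_const_mul _ (hmeas.mul (measurable_fderiv ℝ u).enorm)
    _ ≤ γ * ((∫⁻ x, ‖u x‖ₑ ^ r) ^ (1 / q) * (∫⁻ x, ‖fderiv ℝ u x‖ₑ ^ p) ^ (1 / p)) := by
        gcongr
        refine (ENNReal.lintegral_mul_le_Lp_mul_Lq _ hpq.symm hmeas.aemeasurable
          (measurable_fderiv ℝ u).enorm.aemeasurable).trans_eq ?_
        simp only [← ENNReal.rpow_mul, hγq]
    _ = _ := by ring

theorem eLpNorm_le_eLpNorm_fderiv_of_differentiable {u : (ι → ℝ) → F} (hu : Differentiable ℝ u)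
    (h2u : HasCompactSupport u) {p : ℝ} (hp : 1 < p) (hpn : p < Fintype.card ι) :
    eLpNorm u (ENNReal.ofReal (Fintype.card ι * p / (Fintype.card ι - p))) volume ≤
      ENNReal.ofReal (p * (Fintype.card ι - 1) / (Fintype.card ι - p)) *
        eLpNorm (fderiv ℝ u) (ENNReal.ofReal p) volume := by
  set n : ℝ := (Fintype.card ι : ℝ)
  set r := n * p / (n - p) with hr_def
  have hnp : 0 < n - p := sub_pos.mpr hpn
  have hn : 1 < n := hp.trans hpn
  have hr : 0 < r := div_pos (by nlinarith) hnp
  have hn1 : n - 1 ≠ 0 := by linarith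
  have hp1 : p - 1 ≠ 0 := by linarith
  let γ : ℝ≥0 := ⟨p * (n - 1) / (n - p), by have := hn.le; positivity⟩
  have hγ_def : (γ : ℝ) = p * (n - 1) / (n - p) := rfl
  have hγ : 1 < γ := by
    rw [← NNReal.coe_lt_coe, hγ_def, NNReal.coe_one, one_lt_div hnp]
    nlinarith
  have hn' : Real.HolderConjugate n n.conjExponent := .conjExponent hn
  have hpq : Real.HolderConjugate p p.conjExponent := .conjExponent hp
  have hγn' : γ * n.conjExponent = r := by
    rw [hγ_def, Real.conjExponent, hr_def]
    field_simp
  have hγq : (γ - 1) * p.conjExponent = r := by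
    rw [hγ_def, Real.conjExponent, hr_def]
    field_simp
    ring
  have key := lintegral_rpow_le_of_differentiable hu h2u hn' hpq hγ hγn' hγq
  set I := ∫⁻ x, ‖u x‖ₑ ^ r
  rw [eLpNorm_eq_lintegral_rpow_enorm_toReal (by simpa using hr) ENNReal.ofReal_ne_top,
    eLpNorm_eq_lintegral_rpow_enorm_toReal (by simpa using hp.trans' one_pos) ENNReal.ofReal_ne_top,
    ENNReal.toReal_ofReal hr.le, ENNReal.toReal_ofReal (hp.trans' one_pos).le]
  rcases eq_or_ne I 0 with hI0 | hI0
  · simp [I, hI0, hr]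
  have hItop : I ≠ ∞ := by
    have := lintegral_rpow_enorm_lt_top_of_eLpNorm_lt_top (by simpa using hr) ENNReal.ofReal_ne_top
      (hu.continuous.memLp_of_hasCompactSupport (μ := volume) h2u).eLpNorm_lt_top
    rw [ENNReal.toReal_ofReal hr.le] at this
    exact this.ne
  have hexp : 1 / r = 1 / n.conjExponent - 1 / p.conjExponent := by
    rw [Real.conjExponent, Real.conjExponent, hr_def]
    field_simp
    ring
  rw [hexp, ENNReal.rpow_sub _ _ hI0 hItop, ENNReal.div_le_iff (by positivity) (by finiteness)]
  rw [← hγ_def, ENNReal.ofReal_coe_nnreal]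
  exact key.trans_eq (by ring)

end GagliardoNirenbergSobolevLp

section Cutoff

variable {E : Type*} [NormedAddCommGroup E] [NormedSpace ℝ E] [FiniteDimensional ℝ E]

theorem ContDiffBump.exists_mul_norm_fderiv_comp_smul_le (f : ContDiffBump (0 : E)) :
    ∃ K, ∀ c : ℝ, |c| ≤ 1 → ∀ x, (1 + ‖x‖) * ‖fderiv ℝ (fun y ↦ f (c • y)) x‖ ≤ K := by
  obtain ⟨M, hM⟩ := (f.hasCompactSupport.fderiv ℝ).exists_bound_of_continuous
    (f.contDiff.continuous_fderiv one_ne_zero)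
  have hM0 : 0 ≤ M := (norm_nonneg _).trans (hM 0)
  refine ⟨M * (1 + f.rOut), fun c hc x ↦ ?_⟩
  rw [fderiv_comp_smul, norm_smul, Real.norm_eq_abs]
  -- `fderiv f (c • x)` vanishes unless `‖c • x‖ ≤ rOut`, and then `(1 + ‖x‖) |c| ≤ 1 + rOut`.
  by_cases hx : ‖c • x‖ ≤ f.rOut
  · rw [norm_smul, Real.norm_eq_abs] at hx
    have := hM (c • x)
    have := f.rOut_pos
    nlinarith [abs_nonneg c, norm_nonneg x, norm_nonneg (fderiv ℝ f (c • x))]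
  · have hzero : fderiv ℝ f (c • x) = 0 := by
      refine notMem_support.mp fun h ↦ hx ?_
      simpa [f.tsupport_eq] using support_fderiv_subset ℝ h
    simp only [hzero, norm_zero, mul_zero]
    have := f.rOut_pos
    positivity

theorem ContDiffBump.eventually_comp_smul_eq_one (f : ContDiffBump (0 : E)) (x : E) :
    ∀ᶠ c in 𝓝 (0 : ℝ), f (c • x) = 1 := by
  have : Tendsto (fun c : ℝ ↦ c • x) (𝓝 0) (𝓝 0) := by
    simpa using (tendsto_id (x := 𝓝 (0 : ℝ))).smul_const x
  exact this.eventually f.eventuallyEq_one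

end Cutoff

section Weight

variable {n : ℕ}

theorem one_le_wt (x : Fin n → ℝ) : 1 ≤ wt x :=
  Real.one_le_sqrt.mpr (le_add_of_nonneg_left (by positivity))

theorem wt_pos (x : Fin n → ℝ) : 0 < wt x := one_pos.trans_le (one_le_wt x)

theorem abs_le_wt (x : Fin n → ℝ) (i : Fin n) : |x i| ≤ wt x :=
  Real.abs_le_sqrt <| (Finset.single_le_sum (fun j _ ↦ sq_nonneg (x j)) (Finset.mem_univ i)).trans
    (le_add_of_nonneg_right zero_le_one)

theorem wt_le_mul_one_add_norm (x : Fin n → ℝ) : wt x ≤ (n + 1) * (1 + ‖x‖) := by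
  have hsum : ∑ i, x i ^ 2 ≤ n * ‖x‖ ^ 2 := calc
    ∑ i, x i ^ 2 ≤ ∑ _i : Fin n, ‖x‖ ^ 2 := Finset.sum_le_sum fun i _ ↦ by
      simpa using pow_le_pow_left₀ (norm_nonneg _) (norm_le_pi_norm x i) 2
    _ = n * ‖x‖ ^ 2 := by simp
  refine Real.sqrt_le_iff.mpr ⟨by positivity, ?_⟩
  have hx := norm_nonneg x
  have hn : (0 : ℝ) ≤ n := n.cast_nonneg
  nlinarith [mul_nonneg hn hx, mul_nonneg (mul_nonneg hn hn) (sq_nonneg ‖x‖),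
    mul_nonneg (mul_nonneg hn hn) hx]

theorem hasFDerivAt_wt (x : Fin n → ℝ) :
    HasFDerivAt wt
      ((wt x)⁻¹ • ∑ i, x i • (ContinuousLinearMap.proj i : (Fin n → ℝ) →L[ℝ] ℝ)) x := by
  have hsq : HasFDerivAt (fun y : Fin n → ℝ ↦ ∑ i, y i ^ 2 + 1)
      (∑ i, (2 * x i) • (ContinuousLinearMap.proj i : (Fin n → ℝ) →L[ℝ] ℝ)) x := by
    refine (HasFDerivAt.fun_sum fun i _ ↦ ?_).add_const 1
    simpa [mul_comm] using
      ((ContinuousLinearMap.proj i : (Fin n → ℝ) →L[ℝ] ℝ).hasFDerivAt (x := x)).pow 2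
  refine (hsq.sqrt (by positivity)).congr_fderiv ?_
  ext v
  simp only [wt, FunLike.coe_smul, FunLike.coe_sum, Pi.smul_apply,
    Finset.sum_apply, ContinuousLinearMap.proj_apply, smul_eq_mul, Finset.mul_sum]
  congr! 1 with i
  field_simp

theorem differentiable_wt : Differentiable ℝ (wt (n := n)) :=
  fun x ↦ (hasFDerivAt_wt x).differentiableAt

theorem continuous_wt_rpow (α : ℝ) : Continuous fun x : Fin n → ℝ ↦ wt x ^ α :=
  differentiable_wt.continuous.rpow_const fun x ↦ Or.inl (wt_pos x).ne'

theorem norm_fderiv_wt_le (x : Fin n → ℝ) : ‖fderiv ℝ wt x‖ ≤ n := by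
  rw [(hasFDerivAt_wt x).fderiv]
  refine ContinuousLinearMap.opNorm_le_bound _ n.cast_nonneg fun v ↦ ?_
  simp only [FunLike.coe_smul, FunLike.coe_sum, Pi.smul_apply,
    Finset.sum_apply, ContinuousLinearMap.proj_apply, smul_eq_mul, Real.norm_eq_abs, abs_mul,
    abs_inv, abs_of_pos (wt_pos x), inv_mul_le_iff₀ (wt_pos x)]
  calc |∑ i, x i * v i| ≤ ∑ i, |x i| * |v i| := by
        simpa only [abs_mul] using Finset.abs_sum_le_sum_abs (fun i ↦ x i * v i) Finset.univ
    _ ≤ ∑ _i : Fin n, wt x * ‖v‖ := Finset.sum_le_sum fun i _ ↦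
        mul_le_mul (abs_le_wt x i) (norm_le_pi_norm v i) (abs_nonneg _) (wt_pos x).le
    _ = wt x * (n * ‖v‖) := by
        rw [Finset.sum_const, Finset.card_univ, Fintype.card_fin, nsmul_eq_mul]
        ring

theorem norm_fderiv_wt_rpow_le (α : ℝ) (x : Fin n → ℝ) :
    ‖fderiv ℝ (fun y ↦ wt y ^ α) x‖ ≤ |α| * n * wt x ^ (α - 1) := by
  rw [((differentiable_wt x).hasFDerivAt.rpow_const (Or.inl (wt_pos x).ne')).fderiv,
    norm_smul, Real.norm_eq_abs, abs_mul, abs_of_pos (Real.rpow_pos_of_pos (wt_pos x) _)]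
  calc |α| * wt x ^ (α - 1) * ‖fderiv ℝ wt x‖ ≤ |α| * wt x ^ (α - 1) * n :=
        mul_le_mul_of_nonneg_left (norm_fderiv_wt_le x)
          (mul_nonneg (abs_nonneg α) (Real.rpow_nonneg (wt_pos x).le _))
    _ = |α| * n * wt x ^ (α - 1) := by ring

end Weight

theorem MeasureTheory.eLpNorm_le_ofReal_mul_add_of_norm_le {α E F G : Type*}
    [MeasurableSpace α] {μ : Measure α} [NormedAddCommGroup E] [NormedAddCommGroup F]
    [NormedAddCommGroup G] {f : α → E} {g : α → F} {h : α → G} {C : ℝ} {p : ℝ≥0∞}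
    (hp : 1 ≤ p) (hg : AEStronglyMeasurable g μ) (hh : AEStronglyMeasurable h μ)
    (hfgh : ∀ x, ‖f x‖ ≤ C * (‖g x‖ + ‖h x‖)) :
    eLpNorm f p μ ≤ ENNReal.ofReal C * (eLpNorm g p μ + eLpNorm h p μ) := calc
  eLpNorm f p μ ≤ ENNReal.ofReal C * eLpNorm (fun x ↦ ‖g x‖ + ‖h x‖) p μ :=
    eLpNorm_le_mul_eLpNorm_of_ae_le_mul (.of_forall fun x ↦ by
      simpa [abs_of_nonneg (add_nonneg (norm_nonneg (g x)) (norm_nonneg (h x)))] using hfgh x) p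
  _ ≤ ENNReal.ofReal C * (eLpNorm g p μ + eLpNorm h p μ) := by
    gcongr
    exact (eLpNorm_add_le hg.norm hh.norm hp).trans_eq (by rw [eLpNorm_norm, eLpNorm_norm])

theorem norm_fderiv_mul_le {𝕜 E : Type*} [NontriviallyNormedField 𝕜] [NormedAddCommGroup E]
    [NormedSpace 𝕜 E] {c d : E → 𝕜} {x : E} (hc : DifferentiableAt 𝕜 c x)
    (hd : DifferentiableAt 𝕜 d x) :
    ‖fderiv 𝕜 (fun y ↦ c y * d y) x‖ ≤ ‖c x‖ * ‖fderiv 𝕜 d x‖ + ‖d x‖ * ‖fderiv 𝕜 c x‖ := by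
  rw [fderiv_fun_mul hc hd]
  exact (norm_add_le _ _).trans (by simp only [norm_smul, le_refl])

section WeightedCutoff

variable {n : ℕ} (f : ContDiffBump (0 : Fin n → ℝ)) (α : ℝ)

theorem differentiable_bump_mul_wt_rpow (c : ℝ) :
    Differentiable ℝ (fun y ↦ f (c • y) * wt y ^ α) := fun x ↦
  ((f.contDiff.differentiable one_ne_zero).comp (differentiable_id.const_smul c) x).mul
    ((differentiable_wt x).rpow_const (Or.inl (wt_pos x).ne'))

theorem exists_norm_fderiv_bump_mul_wt_rpow_le :
    ∃ C ≥ 0, ∀ R ≥ (1 : ℝ), ∀ x,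
      ‖fderiv ℝ (fun y ↦ f (R⁻¹ • y) * wt y ^ α) x‖ ≤ C * wt x ^ (α - 1) := by
  obtain ⟨K, hK⟩ := f.exists_mul_norm_fderiv_comp_smul_le
  have hK0 : 0 ≤ K := (mul_nonneg (by positivity) (norm_nonneg _)).trans (hK 0 (by simp) 0)
  refine ⟨(n + 1) * K + |α| * n, by positivity, fun R hR x ↦ ?_⟩
  have hRinv : |R⁻¹| ≤ 1 := by
    rw [abs_of_pos (by positivity)]
    exact inv_le_one_of_one_le₀ hR
  have hw := wt_pos x
  have hwα : wt x ^ α = wt x ^ (α - 1) * wt x := by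
    rw [← Real.rpow_add_one hw.ne', sub_add_cancel]
  have hχ : DifferentiableAt ℝ (fun y ↦ f (R⁻¹ • y)) x :=
    (f.contDiff.differentiable one_ne_zero).comp (differentiable_id.const_smul R⁻¹) x
  have hwt : DifferentiableAt ℝ (fun y ↦ wt y ^ α) x :=
    (differentiable_wt x).rpow_const (Or.inl hw.ne')
  have hcut : wt x * ‖fderiv ℝ (fun y ↦ f (R⁻¹ • y)) x‖ ≤ (n + 1) * K := calc
    _ ≤ (n + 1) * (1 + ‖x‖) * ‖fderiv ℝ (fun y ↦ f (R⁻¹ • y)) x‖ := by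
      gcongr
      exact wt_le_mul_one_add_norm x
    _ ≤ (n + 1) * K := by
      rw [mul_assoc]
      gcongr
      exact hK _ hRinv x
  calc ‖fderiv ℝ (fun y ↦ f (R⁻¹ • y) * wt y ^ α) x‖
      ≤ ‖f (R⁻¹ • x)‖ * ‖fderiv ℝ (fun y ↦ wt y ^ α) x‖ +
          ‖wt x ^ α‖ * ‖fderiv ℝ (fun y ↦ f (R⁻¹ • y)) x‖ := norm_fderiv_mul_le hχ hwt
    _ ≤ 1 * (|α| * n * wt x ^ (α - 1)) +
          wt x ^ (α - 1) * (wt x * ‖fderiv ℝ (fun y ↦ f (R⁻¹ • y)) x‖) := by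
      rw [Real.norm_of_nonneg (f.nonneg' _), Real.norm_of_nonneg (by positivity), hwα, mul_assoc]
      gcongr
      · exact f.le_one
      · exact norm_fderiv_wt_rpow_le α x
    _ ≤ 1 * (|α| * n * wt x ^ (α - 1)) + wt x ^ (α - 1) * ((n + 1) * K) := by
      gcongr
    _ = ((n + 1) * K + |α| * n) * wt x ^ (α - 1) := by ring

theorem exists_norm_fderiv_bump_mul_wt_rpow_mul_le :
    ∃ C > 0, ∀ R ≥ (1 : ℝ), ∀ u : (Fin n → ℝ) → ℝ, Differentiable ℝ u → ∀ x,
      ‖fderiv ℝ (fun y ↦ f (R⁻¹ • y) * wt y ^ α * u y) x‖ ≤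
        C * (‖wt x ^ (α - 1) * u x‖ + ‖wt x ^ α * ‖fderiv ℝ u x‖‖) := by
  obtain ⟨C, hC, hψ⟩ := exists_norm_fderiv_bump_mul_wt_rpow_le f α
  refine ⟨1 + C, by positivity, fun R hR u hu x ↦ ?_⟩
  have hw := wt_pos x
  calc ‖fderiv ℝ (fun y ↦ f (R⁻¹ • y) * wt y ^ α * u y) x‖
      ≤ ‖f (R⁻¹ • x) * wt x ^ α‖ * ‖fderiv ℝ u x‖ +
          ‖u x‖ * ‖fderiv ℝ (fun y ↦ f (R⁻¹ • y) * wt y ^ α) x‖ :=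
        norm_fderiv_mul_le (differentiable_bump_mul_wt_rpow f α _ x) (hu x)
    _ ≤ wt x ^ α * ‖fderiv ℝ u x‖ + ‖u x‖ * (C * wt x ^ (α - 1)) := by
      gcongr
      · rw [norm_mul, Real.norm_of_nonneg (f.nonneg' _),
          Real.norm_of_nonneg (Real.rpow_nonneg hw.le _)]
        exact mul_le_of_le_one_left (Real.rpow_nonneg hw.le _) f.le_one
      · exact hψ R hR x
    _ ≤ (1 + C) * (wt x ^ (α - 1) * ‖u x‖ + wt x ^ α * ‖fderiv ℝ u x‖) := by
      have := mul_nonneg (Real.rpow_nonneg hw.le (α - 1)) (norm_nonneg (u x))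
      have := mul_nonneg (Real.rpow_nonneg hw.le α) (norm_nonneg (fderiv ℝ u x))
      nlinarith
    _ = (1 + C) * (‖wt x ^ (α - 1) * u x‖ + ‖wt x ^ α * ‖fderiv ℝ u x‖‖) := by
      rw [norm_mul, norm_mul, norm_norm, Real.norm_of_nonneg (Real.rpow_nonneg hw.le _),
        Real.norm_of_nonneg (Real.rpow_nonneg hw.le _)]

theorem exists_eLpNorm_bump_mul_wt_rpow_mul_le {p : ℝ} (hp : 1 < p) (hpn : p < n) :
    ∃ C > 0, ∀ R ≥ (1 : ℝ), ∀ u : (Fin n → ℝ) → ℝ, Differentiable ℝ u →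
      eLpNorm (fun x ↦ f (R⁻¹ • x) * wt x ^ α * u x) (ENNReal.ofReal (n * p / (n - p))) volume ≤
        ENNReal.ofReal C *
          (eLpNorm (fun x ↦ wt x ^ (α - 1) * u x) (ENNReal.ofReal p) volume +
            eLpNorm (fun x ↦ wt x ^ α * ‖fderiv ℝ u x‖) (ENNReal.ofReal p) volume) := by
  obtain ⟨C, hC, hD⟩ := exists_norm_fderiv_bump_mul_wt_rpow_mul_le f α
  have hγ : 0 < p * (n - 1) / (n - p) := div_pos (by nlinarith) (by linarith)
  refine ⟨p * (n - 1) / (n - p) * C, mul_pos hγ hC, fun R hR u hu ↦ ?_⟩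
  have hsupp : HasCompactSupport fun x ↦ f (R⁻¹ • x) * wt x ^ α * u x :=
    ((f.hasCompactSupport.comp_smul (inv_ne_zero (by positivity))).mul_right).mul_right
  have hGNS := eLpNorm_le_eLpNorm_fderiv_of_differentiable
    ((differentiable_bump_mul_wt_rpow f α _).mul hu) hsupp hp (by simpa using hpn)
  rw [Fintype.card_fin] at hGNS
  rw [ENNReal.ofReal_mul hγ.le, mul_assoc]
  refine hGNS.trans ?_
  gcongr
  exact eLpNorm_le_ofReal_mul_add_of_norm_le (ENNReal.one_le_ofReal.mpr hp.le)
    ((continuous_wt_rpow _).mul hu.continuous).aestronglyMeasurable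
    ((continuous_wt_rpow _).measurable.mul (measurable_fderiv ℝ u).norm).aestronglyMeasurable
    (hD R hR u hu)

end WeightedCutoff

theorem weighted_sobolev_embedding_subcritical_general
    (n : ℕ) (p : ℝ) (α : ℝ) (hp1 : 1 < p) (hpn : p < n) :
    ∃ C > 0, ∀ u : (Fin n → ℝ) → ℝ, Differentiable ℝ u →
      MemLp (fun x => wt x ^ (α - 1) * u x) (ENNReal.ofReal p) volume →
      MemLp (fun x => wt x ^ α * ‖fderiv ℝ u x‖) (ENNReal.ofReal p) volume →
      MemLp (fun x => wt x ^ α * u x) (ENNReal.ofReal (n * p / (n - p))) volume ∧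
        eLpNorm (fun x => wt x ^ α * u x) (ENNReal.ofReal (n * p / (n - p))) volume ≤
          ENNReal.ofReal C *
            (eLpNorm (fun x => wt x ^ (α - 1) * u x) (ENNReal.ofReal p) volume +
              eLpNorm (fun x => wt x ^ α * ‖fderiv ℝ u x‖) (ENNReal.ofReal p) volume) := by
  let f : ContDiffBump (0 : Fin n → ℝ) := ⟨1, 2, one_pos, one_lt_two⟩
  obtain ⟨C, hC, hcut⟩ := exists_eLpNorm_bump_mul_wt_rpow_mul_le f α hp1 hpn
  refine ⟨C, hC, fun u hu hf₁ hf₂ ↦ ?_⟩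
  have hlim (x : Fin n → ℝ) : Tendsto (fun R : ℝ ↦ f (R⁻¹ • x) * wt x ^ α * u x) atTop
      (𝓝 (wt x ^ α * u x)) :=
    tendsto_const_nhds.congr' <| (tendsto_inv_atTop_zero.eventually
      (f.eventually_comp_smul_eq_one x)).mono fun R hR ↦ by simp only [hR, one_mul]
  have hbound := Lp.eLpNorm_le_of_ae_tendsto
    ((eventually_ge_atTop 1).mono fun R hR ↦ hcut R hR u hu)
    (fun R ↦ ((differentiable_bump_mul_wt_rpow f α _).mul hu).continuous.aestronglyMeasurable)
    (.of_forall hlim)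
  refine ⟨⟨((continuous_wt_rpow α).mul hu.continuous).aestronglyMeasurable, ?_⟩, hbound⟩
  exact hbound.trans_lt <| ENNReal.mul_lt_top ENNReal.ofReal_lt_top <|
    ENNReal.add_lt_top.mpr ⟨hf₁.eLpNorm_lt_top, hf₂.eLpNorm_lt_top⟩

/-- Weighted Sobolev embedding `W^{1,p}_α(ℝⁿ) ↪ W^{0,p*}_α(ℝⁿ)` for `1 < p < n`,
where `1/p* = 1/p - 1/n`, i.e. `p* = np/(n-p)`. -/
theorem weighted_sobolev_embedding_subcritical
    (n : ℕ) (hn : 2 ≤ n) (p : ℝ) (α : ℝ) (hp1 : 1 < p) (hpn : p < n) :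
    ∃ C > 0, ∀ u : (Fin n → ℝ) → ℝ, Differentiable ℝ u →
      MemLp (fun x => wt x ^ (α - 1) * u x) (ENNReal.ofReal p) volume →
      MemLp (fun x => wt x ^ α * ‖fderiv ℝ u x‖) (ENNReal.ofReal p) volume →
      MemLp (fun x => wt x ^ α * u x) (ENNReal.ofReal (n * p / (n - p))) volume ∧
        eLpNorm (fun x => wt x ^ α * u x) (ENNReal.ofReal (n * p / (n - p))) volume ≤
          ENNReal.ofReal C *
            (eLpNorm (fun x => wt x ^ (α - 1) * u x) (ENNReal.ofReal p) volume +
              eLpNorm (fun x => wt x ^ α * ‖fderiv ℝ u x‖) (ENNReal.ofReal p) volume) :=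
  weighted_sobolev_embedding_subcritical_general n p α hp1 hpn
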